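/- arXiv:2012.04576 — 5 statements merged into one kernel-verified Lean document; each statement's English description precedes it below -/
import Mathlib

section
/- Let f: R^n → R be a convex function such that for every nonzero x ∈ R^n, lim_{β→∞} f(βx) = ∞. Then f is coercive, i.e., lim_{‖x‖→∞} f(x) = ∞. -/
/-!
Once a convex function has risen above its value at the origin along a ray, it keeps growing:
for `0 < β ≤ t`, the point `β • d` lies on the segment from `0` to `t • d`. So if
`f (β • d₀) > max M (f 0)`, continuity gives the same for all `d` near `d₀`, and then
`f (t • d) > M` for all `t ≥ β`. Compactness of the unit sphere turns these local radii into a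
single radius beyond which `f > M`.
-/

open Filter Set Topology Metric Bornology

theorem ConvexOn.apply_smul_le_apply_smul_of_apply_zero_le {E : Type*} [AddCommGroup E]
    [Module ℝ E] {s : Set E} {f : E → ℝ} (hf : ConvexOn ℝ s f) {x : E} {β t : ℝ}
    (h0s : (0 : E) ∈ s) (hts : t • x ∈ s) (hβ : 0 < β) (hβt : β ≤ t)
    (h0 : f 0 ≤ f (β • x)) : f (β • x) ≤ f (t • x) := by
  have ht : 0 < t := hβ.trans_le hβt
  have hβx : (1 - β / t) • (0 : E) + (β / t) • (t • x) = β • x := by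
    rw [smul_zero, zero_add, smul_smul, div_mul_cancel₀ β ht.ne']
  have hsub : 0 ≤ 1 - β / t := sub_nonneg.2 ((div_le_one ht).2 hβt)
  rw [← hβx] at h0 ⊢
  exact hf.le_right_of_left_le' h0s hts hsub (div_pos hβ ht) (by ring) h0

section

variable {E : Type*} [NormedAddCommGroup E] [NormedSpace ℝ E] {f : E → ℝ}

theorem ConvexOn.eventually_lt_apply_smul_prod_nhds (hf : ConvexOn ℝ univ f)
    (hcont : Continuous f) {d₀ : E} (hray : Tendsto (fun t : ℝ => f (t • d₀)) atTop atTop)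
    (M : ℝ) : ∀ᶠ p in (atTop : Filter ℝ) ×ˢ 𝓝 d₀, M < f (p.1 • p.2) := by
  obtain ⟨β, hβd₀, hβ⟩ :=
    ((hray.eventually_gt_atTop (max M (f 0))).and (eventually_gt_atTop (0 : ℝ))).exists
  have hnear : ∀ᶠ d in 𝓝 d₀, max M (f 0) < f (β • d) :=
    ((hcont.comp (continuous_const_smul β)).tendsto d₀).eventually_const_lt hβd₀
  filter_upwards [prod_mem_prod (Ici_mem_atTop β) hnear] with ⟨t, d⟩ ⟨hβt, hd⟩
  have hmono := hf.apply_smul_le_apply_smul_of_apply_zero_le (mem_univ 0) (mem_univ (t • d))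
    hβ hβt (le_max_right M _ |>.trans hd.le)
  exact (le_max_left M _).trans_lt (hd.trans_le hmono)

theorem ConvexOn.eventually_forall_lt_apply_smul (hf : ConvexOn ℝ univ f) (hcont : Continuous f)
    {K : Set E} (hK : IsCompact K)
    (hray : ∀ d ∈ K, Tendsto (fun t : ℝ => f (t • d)) atTop atTop) (M : ℝ) :
    ∀ᶠ t : ℝ in atTop, ∀ d ∈ K, M < f (t • d) := by
  have hprod : ∀ᶠ p : ℝ × E in atTop ×ˢ 𝓝ˢ K, M < f (p.1 • p.2) :=
    hK.mem_prod_nhdsSet_of_forall fun d hd =>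
      hf.eventually_lt_apply_smul_prod_nhds hcont (hray d hd) M
  exact hprod.curry.mono fun _ h => h.self_of_nhdsSet

theorem ConvexOn.tendsto_cobounded_atTop [FiniteDimensional ℝ E] (hf : ConvexOn ℝ univ f)
    (hray : ∀ x : E, x ≠ 0 → Tendsto (fun t : ℝ => f (t • x)) atTop atTop) :
    Tendsto f (cobounded E) atTop := by
  refine tendsto_atTop.2 fun M => ?_
  have hsphere : ∀ᶠ t : ℝ in atTop, ∀ d ∈ sphere (0 : E) 1, M < f (t • d) :=
    hf.eventually_forall_lt_apply_smul hf.locallyLipschitz.continuous (isCompact_sphere 0 1)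
      (fun d hd => hray d (ne_of_mem_sphere hd one_ne_zero)) M
  obtain ⟨R, hR⟩ := hsphere.exists_forall_of_atTop
  filter_upwards [eventually_cobounded_le_norm (max R 1)] with x hx
  have hx0 : x ≠ 0 := norm_pos_iff.1 (zero_lt_one.trans_le ((le_max_right _ _).trans hx))
  have hunit : ‖x‖⁻¹ • x ∈ sphere (0 : E) 1 := by
    rw [mem_sphere_zero_iff_norm, norm_smul, norm_inv, norm_norm,
      inv_mul_cancel₀ (norm_ne_zero_iff.2 hx0)]
  have hMx := hR ‖x‖ ((le_max_left _ _).trans hx) _ hunit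
  rw [smul_inv_smul₀ (norm_ne_zero_iff.2 hx0)] at hMx
  exact hMx.le

end

theorem coercive_of_coercive_along_rays {n : ℕ} (f : EuclideanSpace ℝ (Fin n) → ℝ)
    (hconv : ConvexOn ℝ Set.univ f)
    (hray : ∀ x : EuclideanSpace ℝ (Fin n), x ≠ 0 →
      Tendsto (fun β : ℝ => f (β • x)) atTop atTop) :
    ∀ M : ℝ, ∃ R : ℝ, ∀ x : EuclideanSpace ℝ (Fin n), R ≤ ‖x‖ → M ≤ f x := by
  intro M
  obtain ⟨R, -, hR⟩ := hasBasis_cobounded_norm.eventually_iff.1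
    (tendsto_atTop.1 (hconv.tendsto_cobounded_atTop hray) M)
  exact ⟨R, fun x hx => hR hx⟩
end

section
/- For any probability vector y ∈ R^C with strictly positive entries, the smallest eigenvalue of the restriction of Q = diag(y) − y yᵀ to the hyperplane 𝟙^⊥ is at least min_i y_i; that is, vᵀ Q v ≥ (min_i y_i)·‖v‖² for every v ∈ R^C orthogonal to 𝟙. -/
/-!
On `𝟙^⊥` the quadratic form of `Q` is the `y`-weighted variance `∑ yᵢ vᵢ² - (∑ yᵢ vᵢ)²`, and
the mean `∑ yᵢ vᵢ` does not change when every weight is lowered by `m = minᵢ yᵢ`. The lowered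
weights `yᵢ - m` are nonnegative with total mass `1 - C m ≤ 1`, so by Cauchy–Schwarz
`(∑ (yᵢ - m) vᵢ)² ≤ ∑ (yᵢ - m) vᵢ²`, which rearranges to `m ‖v‖² ≤ vᵀ Q v`.
-/

open Matrix

lemma dotProduct_mulVec_diagonal_sub_vecMulVec {ι R : Type*} [Fintype ι] [DecidableEq ι]
    [CommRing R] (y v : ι → R) :
    v ⬝ᵥ (diagonal y - vecMulVec y y) *ᵥ v = ∑ i, y i * v i ^ 2 - (∑ i, y i * v i) ^ 2 := by
  rw [sub_mulVec, dotProduct_sub, vecMulVec_mulVec, op_smul_eq_smul, dotProduct_smul,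
    smul_eq_mul, dotProduct_comm v y, ← sq]
  congr 1
  simp only [dotProduct, mulVec_diagonal]
  exact Finset.sum_congr rfl fun i _ => by ring

lemma sq_sum_mul_le_sum_mul_sq {ι R : Type*} [Fintype ι] [CommRing R] [LinearOrder R]
    [IsStrictOrderedRing R] {w : ι → R} (v : ι → R)
    (hw : ∀ i, 0 ≤ w i) (hw1 : ∑ i, w i ≤ 1) : (∑ i, w i * v i) ^ 2 ≤ ∑ i, w i * v i ^ 2 := by
  have hwv : 0 ≤ ∑ i, w i * v i ^ 2 :=
    Finset.sum_nonneg fun i _ => mul_nonneg (hw i) (sq_nonneg _)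
  calc (∑ i, w i * v i) ^ 2 ≤ (∑ i, w i) * ∑ i, w i * v i ^ 2 :=
        Finset.sum_sq_le_sum_mul_sum_of_sq_le_mul _ (fun i _ => hw i)
          (fun i _ => mul_nonneg (hw i) (sq_nonneg _)) fun i _ => (by ring : _ = _).le
    _ ≤ ∑ i, w i * v i ^ 2 := mul_le_of_le_one_left hwv hw1

lemma mul_sum_sq_le_sum_mul_sq_sub_sq {ι R : Type*} [Fintype ι] [CommRing R] [LinearOrder R]
    [IsStrictOrderedRing R] {y v : ι → R} {m : R}
    (hm : 0 ≤ m) (hmy : ∀ i, m ≤ y i) (hy : ∑ i, y i = 1) (hv : ∑ i, v i = 0) :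
    m * ∑ i, v i ^ 2 ≤ ∑ i, y i * v i ^ 2 - (∑ i, y i * v i) ^ 2 := by
  have hmean : ∑ i, y i * v i = ∑ i, (y i - m) * v i := by
    simp only [sub_mul, Finset.sum_sub_distrib, ← Finset.mul_sum, hv, mul_zero, sub_zero]
  have hmass : ∑ i, (y i - m) ≤ 1 := by
    rw [Finset.sum_sub_distrib, hy, Finset.sum_const, nsmul_eq_mul]
    exact sub_le_self _ (by positivity)
  calc m * ∑ i, v i ^ 2 = ∑ i, y i * v i ^ 2 - ∑ i, (y i - m) * v i ^ 2 := by
        simp only [sub_mul, Finset.sum_sub_distrib, ← Finset.mul_sum]; ring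
    _ ≤ ∑ i, y i * v i ^ 2 - (∑ i, (y i - m) * v i) ^ 2 := by
        gcongr; exact sq_sum_mul_le_sum_mul_sq v (fun i => sub_nonneg.2 (hmy i)) hmass
    _ = ∑ i, y i * v i ^ 2 - (∑ i, y i * v i) ^ 2 := by rw [hmean]

theorem Q_lower_bound_on_hyperplane {C : ℕ} (hC : 0 < C) (y : Fin C → ℝ)
    (hy0 : ∀ i, 0 < y i) (hy1 : ∑ i, y i = 1)
    (Q : Matrix (Fin C) (Fin C) ℝ)
    (hQ : Q = Matrix.diagonal y - Matrix.vecMulVec y y) :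
    ∀ v : Fin C → ℝ, ∑ i, v i = 0 →
      (Finset.univ.inf' (Finset.univ_nonempty_iff.mpr ⟨⟨0, hC⟩⟩) y) * (∑ i, v i ^ 2)
        ≤ v ⬝ᵥ Q.mulVec v := by
  intro v hv
  rw [hQ, dotProduct_mulVec_diagonal_sub_vecMulVec]
  refine mul_sum_sq_le_sum_mul_sq_sub_sq ?_ (fun i => Finset.inf'_le _ (Finset.mem_univ i)) hy1 hv
  exact ((Finset.lt_inf'_iff _).2 fun i _ => hy0 i).le
end

section
/- Suppose T has all entries strictly positive, N = D, and X ∈ R^{D×D} is invertible. Then the cross-entropy loss L has a global minimum, and every minimizer is of the form W = R X^{-1} + 𝟙 cᵀ with R = ln(T) (elementwise logarithm) and arbitrary c ∈ R^D. Exactly one minimizer has all column means zero, namely W = (I − (1/C) 𝟙𝟙ᵀ) R X^{-1}. -/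
open Matrix

noncomputable def softmax {C : ℕ} (u : Fin C → ℝ) : Fin C → ℝ :=
  fun i => Real.exp (u i) / ∑ j, Real.exp (u j)

noncomputable def crossEntropyLoss {C D N : ℕ}
    (X : Matrix (Fin D) (Fin N) ℝ) (T : Matrix (Fin C) (Fin N) ℝ)
    (W : Matrix (Fin C) (Fin D) ℝ) : ℝ :=
  -∑ n, ∑ i, T i n * Real.log (softmax (W.mulVec fun d => X d n) i)

/-!
Column by column, Gibbs' inequality `∑ tᵢ log sᵢ ≤ ∑ tᵢ log tᵢ` bounds the loss below by the
entropy `-∑ T log T`, with equality iff every column of `softmax (W X)` is the corresponding column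
of `T`, i.e. iff `W X = log T + 𝟙 kᵀ` for some `k`. Since `X` is invertible this says
`W = log T · X⁻¹ + 𝟙 cᵀ`, and zero column means force `c = -(1/C) (𝟙ᵀ log T X⁻¹)ᵀ`, which is the
centered solution.
-/

open Finset Real

section Gibbs

lemma mul_log_div_le_sub {t s : ℝ} (ht : 0 < t) (hs : 0 < s) : t * log (s / t) ≤ s - t := by
  have h := mul_le_mul_of_nonneg_left (log_le_sub_one_of_pos (div_pos hs ht)) ht.le
  rwa [mul_sub, mul_div_cancel₀ _ ht.ne', mul_one] at h

lemma mul_log_div_lt_sub {t s : ℝ} (ht : 0 < t) (hs : 0 < s) (hst : s ≠ t) :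
    t * log (s / t) < s - t := by
  have hne : s / t ≠ 1 := fun h => hst ((div_eq_one_iff_eq ht.ne').1 h)
  have h := mul_lt_mul_of_pos_left (log_lt_sub_one_of_pos (div_pos hs ht) hne) ht
  rwa [mul_sub, mul_div_cancel₀ _ ht.ne', mul_one] at h

variable {ι : Type*} [Fintype ι] {t s : ι → ℝ}

lemma sum_mul_log_sub_sum_mul_log (ht : ∀ i, 0 < t i) (hs : ∀ i, 0 < s i) :
    ∑ i, t i * log (s i) - ∑ i, t i * log (t i) = ∑ i, t i * log (s i / t i) := by
  rw [← sum_sub_distrib]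
  exact sum_congr rfl fun i _ => by rw [log_div (hs i).ne' (ht i).ne', mul_sub]

lemma sum_mul_log_le_sum_mul_log (ht : ∀ i, 0 < t i) (hs : ∀ i, 0 < s i)
    (hst : ∑ i, s i ≤ ∑ i, t i) : ∑ i, t i * log (s i) ≤ ∑ i, t i * log (t i) := by
  have h := sum_le_sum fun i (_ : i ∈ univ) => mul_log_div_le_sub (ht i) (hs i)
  rw [sum_sub_distrib, ← sum_mul_log_sub_sum_mul_log ht hs] at h
  linarith

lemma sum_mul_log_eq_sum_mul_log_iff (ht : ∀ i, 0 < t i) (hs : ∀ i, 0 < s i)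
    (hst : ∑ i, s i ≤ ∑ i, t i) : ∑ i, t i * log (s i) = ∑ i, t i * log (t i) ↔ s = t := by
  refine ⟨fun h => ?_, fun h => h ▸ rfl⟩
  by_contra hne
  obtain ⟨i, hi⟩ := Function.ne_iff.1 hne
  have hlt := sum_lt_sum (fun j (_ : j ∈ univ) => mul_log_div_le_sub (ht j) (hs j))
    ⟨i, mem_univ i, mul_log_div_lt_sub (ht i) (hs i) hi⟩
  rw [sum_sub_distrib, ← sum_mul_log_sub_sum_mul_log ht hs] at hlt
  linarith

end Gibbs

section Softmax

variable {C : ℕ}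

lemma softmax_pos (u : Fin C → ℝ) (i : Fin C) : 0 < softmax u i :=
  div_pos (exp_pos _) (sum_pos (fun j _ => exp_pos (u j)) ⟨i, mem_univ i⟩)

lemma sum_softmax_le_one (u : Fin C → ℝ) : ∑ i, softmax u i ≤ 1 := by
  simp only [softmax, ← sum_div]
  exact div_self_le_one _

lemma softmax_eq_iff {t : Fin C → ℝ} (ht : ∀ i, 0 < t i) (ht1 : ∑ i, t i = 1)
    (u : Fin C → ℝ) : softmax u = t ↔ ∃ k, ∀ i, u i = log (t i) + k := by
  constructor
  · rintro rfl
    refine ⟨log (∑ j, exp (u j)), fun i => ?_⟩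
    have hS : 0 < ∑ j, exp (u j) := sum_pos (fun j _ => exp_pos (u j)) ⟨i, mem_univ i⟩
    rw [softmax, log_div (exp_pos _).ne' hS.ne', log_exp, sub_add_cancel]
  · rintro ⟨k, hk⟩
    have hsum : ∑ j, exp (u j) = exp k := by
      simp only [hk, exp_add, exp_log (ht _), ← sum_mul, ht1, one_mul]
    funext i
    simp only [softmax]
    rw [hsum, hk i, exp_add, exp_log (ht i), mul_div_cancel_right₀ _ (exp_ne_zero k)]

end Softmax

section Loss

variable {C D N : ℕ} (X : Matrix (Fin D) (Fin N) ℝ) {T : Matrix (Fin C) (Fin N) ℝ}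

lemma crossEntropyLoss_eq (W : Matrix (Fin C) (Fin D) ℝ) :
    crossEntropyLoss X T W = -∑ n, ∑ i, T i n * log (softmax ((W * X)ᵀ n) i) :=
  rfl

variable (hT : ∀ i n, 0 < T i n) (hT1 : ∀ n, ∑ i, T i n = 1)
include hT hT1

lemma sum_mul_log_softmax_le (W : Matrix (Fin C) (Fin D) ℝ) (n : Fin N) :
    ∑ i, T i n * log (softmax ((W * X)ᵀ n) i) ≤ ∑ i, T i n * log (T i n) :=
  sum_mul_log_le_sum_mul_log (hT · n) (softmax_pos _) ((sum_softmax_le_one _).trans (hT1 n).ge)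

lemma neg_sum_mul_log_le_crossEntropyLoss (W : Matrix (Fin C) (Fin D) ℝ) :
    -∑ n, ∑ i, T i n * log (T i n) ≤ crossEntropyLoss X T W := by
  rw [crossEntropyLoss_eq, neg_le_neg_iff]
  exact sum_le_sum fun n _ => sum_mul_log_softmax_le X hT hT1 W n

lemma crossEntropyLoss_eq_neg_sum_mul_log_iff (W : Matrix (Fin C) (Fin D) ℝ) :
    crossEntropyLoss X T W = -∑ n, ∑ i, T i n * log (T i n) ↔
      ∃ k : Fin N → ℝ, W * X = of (fun i n => log (T i n)) + replicateRow (Fin C) k := by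
  rw [crossEntropyLoss_eq, neg_inj,
    sum_eq_sum_iff_of_le fun n _ => sum_mul_log_softmax_le X hT hT1 W n]
  simp only [mem_univ, forall_true_left]
  have hcol : ∀ n, ∑ i, T i n * log (softmax ((W * X)ᵀ n) i) = ∑ i, T i n * log (T i n) ↔
      ∃ k, ∀ i, (W * X) i n = log (T i n) + k := fun n => by
    rw [sum_mul_log_eq_sum_mul_log_iff (hT · n) (softmax_pos _)
      ((sum_softmax_le_one _).trans (hT1 n).ge), softmax_eq_iff (hT · n) (hT1 n)]
    rfl
  simp only [hcol, Classical.skolem]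
  exact exists_congr fun k => forall_comm.trans Matrix.ext_iff

end Loss

section Centering

lemma exists_mul_eq_add_replicateRow_iff {ι n K : Type*} [Fintype n] [DecidableEq n] [CommRing K]
    {X : Matrix n n K} (hX : IsUnit X.det) (W R : Matrix ι n K) :
    (∃ k, W * X = R + replicateRow ι k) ↔ ∃ c, W = R * X⁻¹ + replicateRow ι c := by
  constructor
  · rintro ⟨k, hk⟩
    refine ⟨k ᵥ* X⁻¹, ?_⟩
    rw [replicateRow_vecMul, ← Matrix.add_mul, ← hk, mul_nonsing_inv_cancel_right _ _ hX]
  · rintro ⟨c, rfl⟩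
    refine ⟨c ᵥ* X, ?_⟩
    rw [replicateRow_vecMul, Matrix.add_mul, nonsing_inv_mul_cancel_right _ _ hX]

variable (K : Type*) [Field K] (C : ℕ)

def centeringMatrix : Matrix (Fin C) (Fin C) K :=
  1 - (C : K)⁻¹ • of fun _ _ => 1

variable {K C} {n : Type*} (A : Matrix (Fin C) n K)

lemma centeringMatrix_mul :
    centeringMatrix K C * A = A + replicateRow (Fin C) fun d => -((C : K)⁻¹ * ∑ i, A i d) := by
  rw [centeringMatrix, Matrix.sub_mul, Matrix.one_mul, Matrix.smul_mul]
  ext i d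
  simp [Matrix.mul_apply, sub_eq_add_neg]

lemma sum_add_replicateRow_apply (c : n → K) (d : n) :
    ∑ i, (A + replicateRow (Fin C) c) i d = ∑ i, A i d + C * c d := by
  simp [sum_add_distrib]

variable [CharZero K]

lemma sum_centeringMatrix_mul_apply (d : n) : ∑ i, (centeringMatrix K C * A) i d = 0 := by
  obtain rfl | hC := eq_or_ne C 0
  · simp
  rw [centeringMatrix_mul, sum_add_replicateRow_apply, mul_neg,
    mul_inv_cancel_left₀ (Nat.cast_ne_zero.2 hC), add_neg_cancel]

lemma add_replicateRow_eq_centeringMatrix_mul {c : n → K}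
    (hc : ∀ d, ∑ i, (A + replicateRow (Fin C) c) i d = 0) :
    A + replicateRow (Fin C) c = centeringMatrix K C * A := by
  rw [centeringMatrix_mul]
  ext i d
  have hC : (C : K) ≠ 0 := Nat.cast_ne_zero.2 (Fin.pos i).ne'
  have h := hc d
  rw [sum_add_replicateRow_apply] at h
  simp only [Matrix.add_apply, replicateRow_apply, add_right_inj]
  rw [← mul_neg, eq_inv_mul_iff_mul_eq₀ hC, eq_neg_iff_add_eq_zero, add_comm, h]

end Centering

theorem minimum_invertible_case_general {C D : ℕ}
    (X : Matrix (Fin D) (Fin D) ℝ) (hX : IsUnit X.det)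
    (T : Matrix (Fin C) (Fin D) ℝ)
    (hT : ∀ i n, 0 < T i n) (hT1 : ∀ n, ∑ i, T i n = 1)
    (R : Matrix (Fin C) (Fin D) ℝ) (hR : R = Matrix.of fun i n => Real.log (T i n))
    (W₀ : Matrix (Fin C) (Fin D) ℝ)
    (hW₀ : W₀ = (1 - (C : ℝ)⁻¹ • Matrix.of (fun (_ : Fin C) (_ : Fin C) => (1 : ℝ)))
        * (R * X⁻¹)) :
    (∃ W, ∀ W', crossEntropyLoss X T W ≤ crossEntropyLoss X T W') ∧
    (∀ W, (∀ W', crossEntropyLoss X T W ≤ crossEntropyLoss X T W') ↔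
        ∃ c : Fin D → ℝ, W = R * X⁻¹ + Matrix.of fun _ d => c d) ∧
    (∀ W', crossEntropyLoss X T W₀ ≤ crossEntropyLoss X T W') ∧
    (∀ d, ∑ i, W₀ i d = 0) ∧
    (∀ W, (∀ W', crossEntropyLoss X T W ≤ crossEntropyLoss X T W') →
        (∀ d, ∑ i, W i d = 0) → W = W₀) := by
  set H := -∑ n, ∑ i, T i n * log (T i n)
  have hle : ∀ W, H ≤ crossEntropyLoss X T W := neg_sum_mul_log_le_crossEntropyLoss X hT hT1
  have hopt : ∀ W, crossEntropyLoss X T W = H ↔ ∃ c, W = R * X⁻¹ + replicateRow (Fin C) c :=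
    fun W => by
      rw [crossEntropyLoss_eq_neg_sum_mul_log_iff X hT hT1, ← hR,
        exists_mul_eq_add_replicateRow_iff hX]
  have hmin : ∀ W, (∀ W', crossEntropyLoss X T W ≤ crossEntropyLoss X T W') ↔
      crossEntropyLoss X T W = H := fun W =>
    ⟨fun h => le_antisymm ((h _).trans ((hopt _).2 ⟨0, rfl⟩).le) (hle W), fun h W' => h ▸ hle W'⟩
  have hW₀min : ∀ W', crossEntropyLoss X T W₀ ≤ crossEntropyLoss X T W' :=
    (hmin W₀).2 <| (hopt W₀).2 ⟨_, hW₀.trans (centeringMatrix_mul _)⟩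
  refine ⟨⟨W₀, hW₀min⟩, fun W => (hmin W).trans (hopt W), hW₀min,
    hW₀ ▸ sum_centeringMatrix_mul_apply _, fun W hW hsum => ?_⟩
  obtain ⟨c, rfl⟩ := (hopt W).1 ((hmin W).1 hW)
  exact (add_replicateRow_eq_centeringMatrix_mul _ hsum).trans hW₀.symm

theorem minimum_invertible_case {C D : ℕ} (hC : 0 < C)
    (X : Matrix (Fin D) (Fin D) ℝ) (hX : IsUnit X.det)
    (T : Matrix (Fin C) (Fin D) ℝ)
    (hT : ∀ i n, 0 < T i n) (hT1 : ∀ n, ∑ i, T i n = 1)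
    (R : Matrix (Fin C) (Fin D) ℝ) (hR : R = Matrix.of fun i n => Real.log (T i n))
    (W₀ : Matrix (Fin C) (Fin D) ℝ)
    (hW₀ : W₀ = (1 - (C : ℝ)⁻¹ • Matrix.of (fun (_ : Fin C) (_ : Fin C) => (1 : ℝ)))
        * (R * X⁻¹)) :
    (∃ W, ∀ W', crossEntropyLoss X T W ≤ crossEntropyLoss X T W') ∧
    (∀ W, (∀ W', crossEntropyLoss X T W ≤ crossEntropyLoss X T W') ↔
        ∃ c : Fin D → ℝ, W = R * X⁻¹ + Matrix.of fun _ d => c d) ∧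
    (∀ W', crossEntropyLoss X T W₀ ≤ crossEntropyLoss X T W') ∧
    (∀ d, ∑ i, W₀ i d = 0) ∧
    (∀ W, (∀ W', crossEntropyLoss X T W ≤ crossEntropyLoss X T W') →
        (∀ d, ∑ i, W i d = 0) → W = W₀) :=
  minimum_invertible_case_general X hX T hT hT1 R hR W₀ hW₀
end

section
/- Suppose T > 0 (all entries strictly positive) and rank(X) = D. Then for every nonzero W ∈ Z = {W ∈ R^{C×D} : 𝟙ᵀW = 0}, lim_{β→∞} L(βW) = ∞; consequently L restricted to Z attains a unique global minimum. -/
open Matrix Filter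

/-!
Write `V = W * X`. The loss is `∑ n, (logSumExp Vₙ - Tₙ ⬝ᵥ Vₙ)` over the columns `Vₙ`, and on a
column with zero sum each term is at least `(min T) * |Vᵢₙ|`. Since `X` has full row rank,
`W ↦ W * X` is injective, so on `Z` the loss grows at least linearly in `‖W‖`: this gives the
limit along rays and, by continuity, a minimiser. Log-sum-exp is strictly convex along every
direction that is not constant, and no nonzero vector with zero sum is constant, so the loss is
strictly convex on `Z` and the minimiser is unique.
-/

lemma Finite.exists_pos_forall_le {α : Type*} [Finite α] {f : α → ℝ} (hf : ∀ a, 0 < f a) :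
    ∃ ε > 0, ∀ a, ε ≤ f a := by
  cases isEmpty_or_nonempty α
  · exact ⟨1, one_pos, isEmptyElim⟩
  · obtain ⟨a, ha⟩ := Finite.exists_min f
    exact ⟨f a, hf a, ha⟩

noncomputable def logSumExp {ι : Type*} [Fintype ι] (u : ι → ℝ) : ℝ :=
  Real.log (∑ i, Real.exp (u i))

noncomputable def softmaxCrossEntropy {ι : Type*} [Fintype ι] (t u : ι → ℝ) : ℝ :=
  logSumExp u - t ⬝ᵥ u

section LogSumExp

variable {ι : Type*} [Fintype ι]

lemma le_logSumExp (u : ι → ℝ) (k : ι) : u k ≤ logSumExp u := by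
  rw [← Real.log_exp (u k)]
  exact Real.log_le_log (Real.exp_pos _)
    (Finset.single_le_sum (fun i _ => (Real.exp_pos (u i)).le) (Finset.mem_univ k))

lemma sum_exp_sub_logSumExp [Nonempty ι] (u : ι → ℝ) :
    ∑ i, Real.exp (u i - logSumExp u) = 1 := by
  have hpos : 0 < ∑ i, Real.exp (u i) :=
    Finset.sum_pos (fun i _ => Real.exp_pos _) Finset.univ_nonempty
  simp only [Real.exp_sub, ← Finset.sum_div, logSumExp, Real.exp_log hpos, div_self hpos.ne']

/-- Writing `x = u - logSumExp u` and `y = v - logSumExp v`, the claim says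
`∑ exp (a x + b y) < 1 = ∑ (a exp x + b exp y)`, strict convexity of `exp`. -/
lemma logSumExp_smul_add_smul_lt {u v : ι → ℝ} (huv : ∃ i j, u i - v i ≠ u j - v j)
    {a b : ℝ} (ha : 0 < a) (hb : 0 < b) (hab : a + b = 1) :
    logSumExp (a • u + b • v) < a * logSumExp u + b * logSumExp v := by
  obtain ⟨i₀, j₀, hij⟩ := huv
  have : Nonempty ι := ⟨i₀⟩
  set U := logSumExp u
  set V := logSumExp v
  have hcomb : ∀ i, (a • u + b • v) i = a * (u i - U) + b * (v i - V) + (a * U + b * V) := by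
    intro i; simp only [Pi.add_apply, Pi.smul_apply, smul_eq_mul]; ring
  have hlt : ∑ i, Real.exp (a * (u i - U) + b * (v i - V)) < 1 := by
    obtain ⟨k, hk⟩ : ∃ k, u k - U ≠ v k - V := by
      by_contra! h
      exact hij (by linarith [h i₀, h j₀])
    calc ∑ i, Real.exp (a * (u i - U) + b * (v i - V))
        < ∑ i, (a * Real.exp (u i - U) + b * Real.exp (v i - V)) := by
          refine Finset.sum_lt_sum (fun i _ => convexOn_exp.2 trivial trivial ha.le hb.le hab)
            ⟨k, Finset.mem_univ k, strictConvexOn_exp.2 trivial trivial hk ha hb hab⟩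
      _ = 1 := by
          rw [Finset.sum_add_distrib, ← Finset.mul_sum, ← Finset.mul_sum,
            sum_exp_sub_logSumExp, sum_exp_sub_logSumExp, mul_one, mul_one, hab]
  have hpos : 0 < ∑ i, Real.exp (a * (u i - U) + b * (v i - V)) :=
    Finset.sum_pos (fun i _ => Real.exp_pos _) Finset.univ_nonempty
  calc logSumExp (a • u + b • v)
      = Real.log (∑ i, Real.exp (a * (u i - U) + b * (v i - V))) + (a * U + b * V) := by
        simp only [logSumExp, hcomb]
        rw [funext fun i => Real.exp_add _ (a * U + b * V), ← Finset.sum_mul,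
          Real.log_mul hpos.ne' (Real.exp_pos _).ne', Real.log_exp]
    _ < a * U + b * V := by linarith [Real.log_neg hpos hlt]

lemma exists_sub_ne_sub_of_sum_eq_zero {u v : ι → ℝ} (hu : ∑ i, u i = 0) (hv : ∑ i, v i = 0)
    (huv : u ≠ v) : ∃ i j, u i - v i ≠ u j - v j := by
  obtain ⟨i, hi⟩ := Function.ne_iff.mp huv
  have : Nonempty ι := ⟨i⟩
  by_contra! h
  have hsum : ∑ j, (u j - v j) = Fintype.card ι * (u i - v i) := by
    simp [← h i, mul_sub]
  rw [Finset.sum_sub_distrib, hu, hv, sub_zero, eq_comm, mul_eq_zero] at hsum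
  exact hi (sub_eq_zero.mp (hsum.resolve_left (Nat.cast_ne_zero.mpr Fintype.card_ne_zero)))

@[fun_prop]
lemma continuous_logSumExp : Continuous (logSumExp (ι := ι)) := by
  change Continuous fun u : ι → ℝ => Real.log (∑ i, Real.exp (u i))
  cases isEmpty_or_nonempty ι
  · simp only [Finset.univ_eq_empty, Finset.sum_empty]
    exact continuous_const
  · exact Continuous.log (by fun_prop) fun u =>
      (Finset.sum_pos (fun i _ => Real.exp_pos (u i)) Finset.univ_nonempty).ne'

end LogSumExp

section SoftmaxCrossEntropy

variable {ι : Type*} [Fintype ι] {t u : ι → ℝ}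

lemma mul_sub_le_softmaxCrossEntropy (ht : ∀ i, 0 ≤ t i) (ht1 : ∑ i, t i = 1) {k : ι}
    (hk : ∀ i, u i ≤ u k) (j : ι) : t j * (u k - u j) ≤ softmaxCrossEntropy t u := by
  have hdot : t ⬝ᵥ u = u k - ∑ i, t i * (u k - u i) := by
    simp only [mul_sub, Finset.sum_sub_distrib, ← Finset.sum_mul, ht1, one_mul, dotProduct]
    ring
  have hj : t j * (u k - u j) ≤ ∑ i, t i * (u k - u i) :=
    Finset.single_le_sum (fun i _ => mul_nonneg (ht i) (sub_nonneg.mpr (hk i)))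
      (Finset.mem_univ j)
  have := le_logSumExp u k
  rw [softmaxCrossEntropy, hdot]
  linarith

lemma softmaxCrossEntropy_nonneg (ht : ∀ i, 0 ≤ t i) (ht1 : ∑ i, t i = 1) :
    0 ≤ softmaxCrossEntropy t u := by
  have : Nonempty ι := by
    by_contra h
    simp [not_nonempty_iff.mp h] at ht1
  obtain ⟨k, hk⟩ := Finite.exists_max u
  simpa using mul_sub_le_softmaxCrossEntropy ht ht1 hk k

/-- The loss dominates `ε (max u - min u)`, and a vector with zero sum has entries bounded by
`max u - min u`. -/
lemma mul_abs_le_softmaxCrossEntropy {ε : ℝ} (hε : 0 ≤ ε) (hεt : ∀ i, ε ≤ t i)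
    (ht1 : ∑ i, t i = 1) (hu : ∑ i, u i = 0) (j : ι) :
    ε * |u j| ≤ softmaxCrossEntropy t u := by
  have : Nonempty ι := ⟨j⟩
  obtain ⟨k, hk⟩ := Finite.exists_max u
  obtain ⟨m, hm⟩ := Finite.exists_min u
  obtain ⟨i₁, -, hi₁⟩ : ∃ i ∈ Finset.univ, u i ≤ 0 :=
    Finset.exists_le_of_sum_le Finset.univ_nonempty (by simp [hu])
  obtain ⟨i₂, -, hi₂⟩ : ∃ i ∈ Finset.univ, 0 ≤ u i :=
    Finset.exists_le_of_sum_le Finset.univ_nonempty (by simp [hu])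
  have habs : |u j| ≤ u k - u m := by
    rw [abs_le]
    constructor <;> linarith [hk j, hm j, hk i₂, hm i₁, hi₁, hi₂]
  calc ε * |u j| ≤ t m * (u k - u m) :=
        mul_le_mul (hεt m) habs (abs_nonneg _) (hε.trans (hεt m))
    _ ≤ softmaxCrossEntropy t u :=
        mul_sub_le_softmaxCrossEntropy (fun i => hε.trans (hεt i)) ht1 hk m

lemma strictConvexOn_softmaxCrossEntropy (t : ι → ℝ) :
    StrictConvexOn ℝ {u : ι → ℝ | ∑ i, u i = 0} (softmaxCrossEntropy t) := by
  refine ⟨fun u hu v hv a b _ _ _ => ?_, fun u hu v hv huv a b ha hb hab => ?_⟩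
  · simp only [Set.mem_ofPred_eq, Pi.add_apply, Pi.smul_apply, smul_eq_mul,
      Finset.sum_add_distrib, ← Finset.mul_sum] at hu hv ⊢
    simp [hu, hv]
  · have := logSumExp_smul_add_smul_lt (exists_sub_ne_sub_of_sum_eq_zero hu hv huv) ha hb hab
    simp only [softmaxCrossEntropy, dotProduct_add, dotProduct_smul, smul_eq_mul]
    linarith

end SoftmaxCrossEntropy

lemma log_softmax {C : ℕ} (u : Fin C → ℝ) (i : Fin C) :
    Real.log (softmax u i) = u i - logSumExp u := by
  have hpos : 0 < ∑ j, Real.exp (u j) :=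
    Finset.sum_pos (fun j _ => Real.exp_pos _) ⟨i, Finset.mem_univ i⟩
  rw [softmax, Real.log_div (Real.exp_pos _).ne' hpos.ne', Real.log_exp, logSumExp]

def colSumZero (m n : Type*) [Fintype m] : Submodule ℝ (Matrix m n ℝ) where
  carrier := {W | ∀ j, ∑ i, W i j = 0}
  add_mem' hA hB j := by simp [Finset.sum_add_distrib, hA j, hB j]
  zero_mem' j := by simp
  smul_mem' c W hW j := by simp [← Finset.mul_sum, hW j]

lemma mul_mem_colSumZero {l m n : Type*} [Fintype l] [Fintype m] {W : Matrix l m ℝ}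
    (hW : W ∈ colSumZero l m) (X : Matrix m n ℝ) : W * X ∈ colSumZero l n := fun k => by
  simp only [mul_apply]
  rw [Finset.sum_comm]
  simp [← Finset.sum_mul, hW _]

lemma Matrix.mul_left_injective_of_rank_eq_card {l m n K : Type*} [Field K] [Fintype m]
    [Fintype n] {X : Matrix m n K} (hX : X.rank = Fintype.card m) :
    Function.Injective fun W : Matrix l m K => W * X := by
  have hrows : LinearIndependent K X.row := by
    rw [linearIndependent_iff_card_eq_finrank_span, Set.finrank, ← rank_eq_finrank_span_row, hX]
  intro W W' h
  funext i
  exact vecMul_injective_iff.mpr hrows (congrFun h i)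

section CrossEntropyLoss

variable {C D N : ℕ} {X : Matrix (Fin D) (Fin N) ℝ} {T : Matrix (Fin C) (Fin N) ℝ}

lemma crossEntropyLoss_eq_sum (hT1 : ∀ n, ∑ i, T i n = 1) (W : Matrix (Fin C) (Fin D) ℝ) :
    crossEntropyLoss X T W = ∑ n, softmaxCrossEntropy (Tᵀ n) ((W * X)ᵀ n) := by
  rw [crossEntropyLoss, ← Finset.sum_neg_distrib]
  refine Finset.sum_congr rfl fun n _ => ?_
  change -∑ i, T i n * Real.log (softmax ((W * X)ᵀ n) i) = _
  simp only [log_softmax, mul_sub, Finset.sum_sub_distrib, ← Finset.sum_mul, hT1 n,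
    softmaxCrossEntropy, dotProduct, transpose_apply]
  ring

lemma continuous_crossEntropyLoss (hT1 : ∀ n, ∑ i, T i n = 1) :
    Continuous (crossEntropyLoss X T) := by
  simp only [funext (crossEntropyLoss_eq_sum hT1), softmaxCrossEntropy]
  fun_prop

lemma crossEntropyLoss_nonneg (hT : ∀ i n, 0 ≤ T i n) (hT1 : ∀ n, ∑ i, T i n = 1)
    (W : Matrix (Fin C) (Fin D) ℝ) : 0 ≤ crossEntropyLoss X T W := by
  rw [crossEntropyLoss_eq_sum hT1]
  exact Finset.sum_nonneg fun n _ => softmaxCrossEntropy_nonneg (fun i => hT i n) (hT1 n)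

lemma mul_abs_le_crossEntropyLoss {ε : ℝ} (hε : 0 ≤ ε) (hεT : ∀ i n, ε ≤ T i n)
    (hT1 : ∀ n, ∑ i, T i n = 1) {W : Matrix (Fin C) (Fin D) ℝ} (hW : W ∈ colSumZero _ _)
    (i : Fin C) (n : Fin N) : ε * |(W * X) i n| ≤ crossEntropyLoss X T W := by
  have hT : ∀ i n, 0 ≤ T i n := fun i n => hε.trans (hεT i n)
  rw [crossEntropyLoss_eq_sum hT1]
  calc ε * |(W * X) i n|
      ≤ softmaxCrossEntropy (Tᵀ n) ((W * X)ᵀ n) :=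
        mul_abs_le_softmaxCrossEntropy hε (fun i => hεT i n) (hT1 n)
          (mul_mem_colSumZero hW X n) i
    _ ≤ _ := Finset.single_le_sum (f := fun n => softmaxCrossEntropy (Tᵀ n) ((W * X)ᵀ n))
        (fun n _ => softmaxCrossEntropy_nonneg (fun i => hT i n) (hT1 n)) (Finset.mem_univ n)

lemma strictConvexOn_crossEntropyLoss
    (hX : Function.Injective fun W : Matrix (Fin C) (Fin D) ℝ => W * X)
    (hT1 : ∀ n, ∑ i, T i n = 1) :
    StrictConvexOn ℝ (colSumZero (Fin C) (Fin D)) (crossEntropyLoss X T) := by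
  refine ⟨(colSumZero _ _).convex, fun W hW W' hW' hne a b ha hb hab => ?_⟩
  obtain ⟨n₀, hn₀⟩ : ∃ n, (W * X)ᵀ n ≠ (W' * X)ᵀ n := by
    by_contra! h
    exact hne (hX (transpose_injective (funext h)))
  have hcol : ∀ n, (W * X)ᵀ n ∈ {u : Fin C → ℝ | ∑ i, u i = 0} := mul_mem_colSumZero hW X
  have hcol' : ∀ n, (W' * X)ᵀ n ∈ {u : Fin C → ℝ | ∑ i, u i = 0} := mul_mem_colSumZero hW' X
  have hmix : ∀ n, ((a • W + b • W') * X)ᵀ n = a • (W * X)ᵀ n + b • (W' * X)ᵀ n := fun n => by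
    rw [Matrix.add_mul, Matrix.smul_mul, Matrix.smul_mul]
    rfl
  simp only [crossEntropyLoss_eq_sum hT1, hmix, smul_eq_mul, Finset.mul_sum,
    ← Finset.sum_add_distrib]
  refine Finset.sum_lt_sum (fun n _ => ?_) ⟨n₀, Finset.mem_univ _, ?_⟩
  · exact (strictConvexOn_softmaxCrossEntropy _).convexOn.2 (hcol n) (hcol' n) ha.le hb.le hab
  · exact (strictConvexOn_softmaxCrossEntropy _).2 (hcol n₀) (hcol' n₀) hn₀ ha hb hab

end CrossEntropyLoss

section Coercive

variable {E : Type*} [NormedAddCommGroup E] {f : E → ℝ} {c : ℝ}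

lemma ContinuousOn.exists_isMinOn_of_mul_norm_le [ProperSpace E] {s : Set E}
    (hf : ContinuousOn f s) (hs : IsClosed s) {x₀ : E} (hx₀ : x₀ ∈ s) (hc : 0 < c)
    (hfs : ∀ x ∈ s, c * ‖x‖ ≤ f x) : ∃ x ∈ s, IsMinOn f s x := by
  refine hf.exists_isMinOn' hs hx₀ ?_
  filter_upwards [mem_inf_of_left (tendsto_norm_cocompact_atTop.eventually_gt_atTop (f x₀ / c)),
    mem_inf_of_right (mem_principal_self s)] with x hx hxs
  rw [div_lt_iff₀' hc] at hx
  exact hx.le.trans (hfs x hxs)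

lemma tendsto_apply_smul_atTop_of_mul_norm_le [NormedSpace ℝ E] {p : Submodule ℝ E}
    (hc : 0 < c) (hfp : ∀ x ∈ p, c * ‖x‖ ≤ f x) {x : E} (hx : x ∈ p) (hx0 : x ≠ 0) :
    Tendsto (fun β : ℝ => f (β • x)) atTop atTop := by
  refine tendsto_atTop_mono' atTop ?_ (tendsto_id.atTop_mul_const (by positivity : 0 < c * ‖x‖))
  filter_upwards [eventually_ge_atTop 0] with β hβ
  calc id β * (c * ‖x‖) = c * ‖β • x‖ := by
        rw [norm_smul, Real.norm_of_nonneg hβ, id]; ring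
    _ ≤ f (β • x) := hfp _ (p.smul_mem β hx)

end Coercive

attribute [local instance] Matrix.normedAddCommGroup Matrix.normedSpace

lemma exists_pos_mul_norm_le_crossEntropyLoss {C D N : ℕ} {X : Matrix (Fin D) (Fin N) ℝ}
    {T : Matrix (Fin C) (Fin N) ℝ}
    (hX : Function.Injective fun W : Matrix (Fin C) (Fin D) ℝ => W * X)
    (hT : ∀ i n, 0 < T i n) (hT1 : ∀ n, ∑ i, T i n = 1) :
    ∃ c > 0, ∀ W ∈ colSumZero (Fin C) (Fin D), c * ‖W‖ ≤ crossEntropyLoss X T W := by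
  obtain ⟨ε, hε, hεT⟩ := Finite.exists_pos_forall_le (f := fun p : Fin C × Fin N => T p.1 p.2)
    fun p => hT p.1 p.2
  obtain ⟨K, -, hK⟩ := ((mulRightLinearMap (Fin C) ℝ X).injective_iff_antilipschitz).mp hX
  obtain ⟨κ, hκ, hκX⟩ := antilipschitzWith_iff_exists_mul_le_norm.mp ⟨K, hK⟩
  refine ⟨κ * ε, by positivity, fun W hW => ?_⟩
  have hL := crossEntropyLoss_nonneg (X := X) (fun i n => (hT i n).le) hT1 W
  have hWX : ‖W * X‖ ≤ crossEntropyLoss X T W / ε := by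
    refine (Matrix.norm_le_iff (div_nonneg hL hε.le)).mpr fun i n => ?_
    rw [le_div_iff₀' hε, Real.norm_eq_abs]
    exact mul_abs_le_crossEntropyLoss hε.le (fun i n => hεT (i, n)) hT1 hW i n
  calc κ * ε * ‖W‖ ≤ ε * ‖W * X‖ := by
        rw [mul_comm κ, mul_assoc]
        exact mul_le_mul_of_nonneg_left (hκX W) hε.le
    _ ≤ crossEntropyLoss X T W := by rwa [← le_div_iff₀' hε]

theorem existence_of_minimum_rank_D {C D N : ℕ}
    (X : Matrix (Fin D) (Fin N) ℝ) (hX : X.rank = D)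
    (T : Matrix (Fin C) (Fin N) ℝ)
    (hT : ∀ i n, 0 < T i n) (hT1 : ∀ n, ∑ i, T i n = 1) :
    (∀ W : Matrix (Fin C) (Fin D) ℝ, (∀ d, ∑ i, W i d = 0) → W ≠ 0 →
        Tendsto (fun β : ℝ => crossEntropyLoss X T (β • W)) atTop atTop) ∧
    (∃! W : Matrix (Fin C) (Fin D) ℝ, (∀ d, ∑ i, W i d = 0) ∧
        ∀ W' : Matrix (Fin C) (Fin D) ℝ, (∀ d, ∑ i, W' i d = 0) →
          crossEntropyLoss X T W ≤ crossEntropyLoss X T W') := by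
  have hXinj :=
    mul_left_injective_of_rank_eq_card (l := Fin C) (hX.trans (Fintype.card_fin D).symm)
  obtain ⟨c, hc, hcoercive⟩ := exists_pos_mul_norm_le_crossEntropyLoss hXinj hT hT1
  refine ⟨fun W hW hW0 => tendsto_apply_smul_atTop_of_mul_norm_le hc hcoercive hW hW0, ?_⟩
  obtain ⟨W₀, hW₀, hW₀min⟩ :=
    (continuous_crossEntropyLoss hT1).continuousOn.exists_isMinOn_of_mul_norm_le
      (colSumZero _ _).closed_of_finiteDimensional (zero_mem _) hc hcoercive
  refine ⟨W₀, ⟨hW₀, fun W hW => hW₀min hW⟩, fun W ⟨hW, hWmin⟩ => ?_⟩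
  exact (strictConvexOn_crossEntropyLoss hXinj hT1).eq_of_isMinOn (fun W' hW' => hWmin W' hW')
    hW₀min hW hW₀
end

section
/- Let K ∈ R^{C×(C−1)} satisfy KᵀK = I_{C−1} and 𝟙ᵀK = 0, and let Q = diag(y) − y yᵀ for a probability vector y with positive entries. Then the smallest eigenvalue of A = Kᵀ Q K equals the smallest eigenvalue of Q restricted to 𝟙^⊥, and satisfies λ_min(KᵀQK) ≥ min_i y_i. Moreover the largest eigenvalue satisfies λ_max(KᵀQK) ≤ tr(Q K Kᵀ) < C. -/
/-!
Because `K` is an isometry into `𝟙ᗮ` and has `C - 1` columns, `K Kᵀ` is the orthogonal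
projection onto `𝟙ᗮ`: both are orthogonal projections, one below the other, of the same trace.
Hence `w ↦ K w` maps the unit sphere of `ℝ^(C-1)` onto the unit sphere of `𝟙ᗮ`, carrying the
Rayleigh quotient of `A` to `vᵀ Q v`, whose minimum over the sphere is the least eigenvalue.

With `μ = ⟨y, v⟩`, the form `vᵀ Q v = ∑ yᵢ (vᵢ - μ)²` is a `y`-weighted variance, so it is at
least `min y · ∑ (vᵢ - μ)² = min y · (1 + C μ²) ≥ min y` on the unit sphere of `𝟙ᗮ`. All
eigenvalues are therefore positive, the largest is at most their sum
`tr A = tr (Q K Kᵀ) = tr Q = 1 - ∑ yᵢ²`, and this is `< 1 < C`.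
-/

open Matrix Finset

namespace Matrix

variable {m n : Type*} [Fintype m]

theorem mulVec_dotProduct_mulVec_mulVec [Fintype n] (K : Matrix m n ℝ) (M : Matrix m m ℝ)
    (w : n → ℝ) :
    (K *ᵥ w) ⬝ᵥ M *ᵥ (K *ᵥ w) = w ⬝ᵥ (Kᵀ * M * K) *ᵥ w := by
  rw [Matrix.mul_assoc, ← mulVec_mulVec, dotProduct_mulVec w, vecMul_transpose, mulVec_mulVec]

theorem mulVec_dotProduct_mulVec_self [Fintype n] [DecidableEq n] {K : Matrix m n ℝ}
    (hK : Kᵀ * K = 1) (w : n → ℝ) :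
    (K *ᵥ w) ⬝ᵥ K *ᵥ w = w ⬝ᵥ w := by
  rw [dotProduct_mulVec, ← mulVec_transpose, mulVec_mulVec, hK, one_mulVec, dotProduct_comm]

theorem one_vecMul_eq_zero {K : Matrix m n ℝ} (hK : ∀ j, ∑ i, K i j = 0) :
    (1 : m → ℝ) ᵥ* K = 0 :=
  funext fun j => by simpa [vecMul, dotProduct] using hK j

theorem sum_mulVec_eq_zero [Fintype n] {K : Matrix m n ℝ} (hK : ∀ j, ∑ i, K i j = 0)
    (w : n → ℝ) : ∑ i, (K *ᵥ w) i = 0 := by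
  rw [← one_dotProduct, dotProduct_mulVec, one_vecMul_eq_zero hK, zero_dotProduct]

/-- Orthogonal projections `P ≤ R` of equal trace coincide, as `R - P` is an orthogonal
projection of trace zero. -/
theorem eq_of_mul_eq_of_trace_eq {P R : Matrix m m ℝ} (hP : Pᵀ = P) (hPP : P * P = P)
    (hR : Rᵀ = R) (hRR : R * R = R) (hRP : R * P = P) (htr : P.trace = R.trace) : P = R := by
  have hPR : P * R = P := by rw [← hP, ← hR, ← transpose_mul, hRP]
  have hsq : (R - P)ᴴ * (R - P) = R - P := by
    rw [conjTranspose_eq_transpose_of_trivial, transpose_sub, hP, hR, sub_mul, mul_sub, mul_sub,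
      hRR, hRP, hPR, hPP]
    abel
  have h0 : ((R - P)ᴴ * (R - P)).trace = 0 := by rw [hsq, trace_sub, htr, sub_self]
  exact (sub_eq_zero.1 (trace_conjTranspose_mul_self_eq_zero_iff.1 h0)).symm

section Centering

variable (m) [DecidableEq m]

/-- The orthogonal projection onto the hyperplane `𝟙ᗮ`. -/
noncomputable def centeringMatrix : Matrix m m ℝ :=
  1 - (Fintype.card m : ℝ)⁻¹ • vecMulVec 1 1

theorem centeringMatrix_transpose : (centeringMatrix m)ᵀ = centeringMatrix m := by
  rw [centeringMatrix, transpose_sub, transpose_smul, transpose_vecMulVec, transpose_one]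

theorem centeringMatrix_mul_self : centeringMatrix m * centeringMatrix m = centeringMatrix m := by
  have hJJ : vecMulVec (1 : m → ℝ) (1 : m → ℝ) * vecMulVec (1 : m → ℝ) (1 : m → ℝ) =
      (Fintype.card m : ℝ) • vecMulVec (1 : m → ℝ) (1 : m → ℝ) := by
    rw [vecMulVec_mul_vecMulVec, one_dotProduct_one, vecMulVec_smul]
  rcases isEmpty_or_nonempty m with hm | hm
  · exact Subsingleton.elim _ _
  have hcard : (Fintype.card m : ℝ) ≠ 0 := Nat.cast_ne_zero.2 Fintype.card_ne_zero
  simp only [centeringMatrix, Matrix.sub_mul, Matrix.mul_sub, Matrix.one_mul, Matrix.mul_one,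
    Matrix.smul_mul, Matrix.mul_smul, hJJ, smul_smul, inv_mul_cancel₀ hcard, one_smul, sub_self,
    smul_zero, sub_zero]

theorem trace_centeringMatrix [Nonempty m] :
    (centeringMatrix m).trace = Fintype.card m - 1 := by
  have hcard : (Fintype.card m : ℝ) ≠ 0 := Nat.cast_ne_zero.2 Fintype.card_ne_zero
  rw [centeringMatrix, trace_sub, trace_one, trace_smul, trace_vecMulVec, one_dotProduct_one,
    smul_eq_mul, inv_mul_cancel₀ hcard]

variable {m}

theorem centeringMatrix_mulVec_of_sum_eq_zero {v : m → ℝ} (hv : ∑ i, v i = 0) :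
    centeringMatrix m *ᵥ v = v := by
  rw [centeringMatrix, sub_mulVec, one_mulVec, smul_mulVec, vecMulVec_mulVec, one_dotProduct, hv,
    MulOpposite.op_zero, zero_smul, smul_zero, sub_zero]

theorem mul_centeringMatrix_of_mulVec_one_eq_zero {M : Matrix n m ℝ} (hM : M *ᵥ 1 = 0) :
    M * centeringMatrix m = M := by
  rw [centeringMatrix, Matrix.mul_sub, Matrix.mul_smul, mul_vecMulVec, hM, zero_vecMulVec,
    smul_zero, Matrix.mul_one, sub_zero]

theorem centeringMatrix_mul_of_sum_eq_zero {K : Matrix m n ℝ} (hK : ∀ j, ∑ i, K i j = 0) :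
    centeringMatrix m * K = K := by
  rw [centeringMatrix, Matrix.sub_mul, Matrix.smul_mul, vecMulVec_mul, one_vecMul_eq_zero hK]
  simp

theorem mul_transpose_eq_centeringMatrix [Fintype n] [DecidableEq n] {K : Matrix m n ℝ}
    (hK : Kᵀ * K = 1) (hK1 : ∀ j, ∑ i, K i j = 0) (hcard : Fintype.card n + 1 = Fintype.card m) :
    K * Kᵀ = centeringMatrix m := by
  have : Nonempty m := Fintype.card_pos_iff.1 (by omega)
  refine eq_of_mul_eq_of_trace_eq (by simp) ?_ (centeringMatrix_transpose m)
    (centeringMatrix_mul_self m) ?_ ?_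
  · rw [Matrix.mul_assoc, ← Matrix.mul_assoc Kᵀ, hK, Matrix.one_mul]
  · rw [← Matrix.mul_assoc, centeringMatrix_mul_of_sum_eq_zero hK1]
  · rw [trace_mul_comm, hK, trace_one, trace_centeringMatrix, ← hcard]
    push_cast
    ring

end Centering

theorem setOf_quadForm_sum_eq_zero_eq [Fintype n] [DecidableEq n] [DecidableEq m]
    (M : Matrix m m ℝ) {K : Matrix m n ℝ} (hK : Kᵀ * K = 1) (hK1 : ∀ j, ∑ i, K i j = 0)
    (hcard : Fintype.card n + 1 = Fintype.card m) :
    {r | ∃ v : m → ℝ, ∑ i, v i = 0 ∧ v ⬝ᵥ v = 1 ∧ r = v ⬝ᵥ M *ᵥ v} =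
      {r | ∃ w : n → ℝ, w ⬝ᵥ w = 1 ∧ r = w ⬝ᵥ (Kᵀ * M * K) *ᵥ w} := by
  ext r
  constructor
  · rintro ⟨v, hv0, hv1, rfl⟩
    have hKv : K *ᵥ (Kᵀ *ᵥ v) = v := by
      rw [mulVec_mulVec, mul_transpose_eq_centeringMatrix hK hK1 hcard,
        centeringMatrix_mulVec_of_sum_eq_zero hv0]
    refine ⟨Kᵀ *ᵥ v, ?_, ?_⟩
    · rw [← mulVec_dotProduct_mulVec_self hK, hKv, hv1]
    · rw [← mulVec_dotProduct_mulVec_mulVec, hKv]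
  · rintro ⟨w, hw1, rfl⟩
    exact ⟨K *ᵥ w, sum_mulVec_eq_zero hK1 w, by rw [mulVec_dotProduct_mulVec_self hK, hw1],
      (mulVec_dotProduct_mulVec_mulVec K M w).symm⟩

namespace IsHermitian

variable [DecidableEq m] {A : Matrix m m ℝ}

theorem exists_dotProduct_self_eq_one_eigenvalues (hA : A.IsHermitian) (j : m) :
    ∃ w : m → ℝ, w ⬝ᵥ w = 1 ∧ w ⬝ᵥ A *ᵥ w = hA.eigenvalues j := by
  have hunit := inner_self_eq_one_of_norm_eq_one (𝕜 := ℝ) (hA.eigenvectorBasis.orthonormal.1 j)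
  rw [EuclideanSpace.inner_eq_star_dotProduct, star_trivial] at hunit
  refine ⟨hA.eigenvectorBasis j, hunit, ?_⟩
  rw [hA.mulVec_eigenvectorBasis, dotProduct_smul, hunit, smul_eq_mul, mul_one]

theorem inf'_eigenvalues_mul_dotProduct_le (hA : A.IsHermitian) (hm : (univ : Finset m).Nonempty)
    (w : m → ℝ) : univ.inf' hm hA.eigenvalues * (w ⬝ᵥ w) ≤ w ⬝ᵥ A *ᵥ w := by
  set μ := univ.inf' hm hA.eigenvalues
  have hpsd : (A - algebraMap ℝ _ μ).PosSemidef := by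
    refine posSemidef_iff_isHermitian_and_spectrum_nonneg.2 ⟨hA.sub (isHermitian_diagonal _), ?_⟩
    rw [← spectrum.sub_singleton_eq, hA.spectrum_real_eq_range_eigenvalues]
    rintro _ ⟨_, ⟨j, rfl⟩, _, rfl, rfl⟩
    exact sub_nonneg.2 (inf'_le hA.eigenvalues (mem_univ j))
  simpa [sub_mulVec, Algebra.algebraMap_eq_smul_one, smul_mulVec, mul_comm] using
    hpsd.dotProduct_mulVec_nonneg w

theorem isLeast_inf'_eigenvalues (hA : A.IsHermitian) (hm : (univ : Finset m).Nonempty) :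
    IsLeast {r | ∃ w : m → ℝ, w ⬝ᵥ w = 1 ∧ r = w ⬝ᵥ A *ᵥ w} (univ.inf' hm hA.eigenvalues) := by
  refine ⟨?_, ?_⟩
  · obtain ⟨j, -, hj⟩ := exists_mem_eq_inf' hm hA.eigenvalues
    obtain ⟨w, hw1, hw⟩ := hA.exists_dotProduct_self_eq_one_eigenvalues j
    exact ⟨w, hw1, hj.trans hw.symm⟩
  · rintro _ ⟨w, hw1, rfl⟩
    simpa [hw1] using hA.inf'_eigenvalues_mul_dotProduct_le hm w

theorem sup'_eigenvalues_le_trace (hA : A.IsHermitian) (hm : (univ : Finset m).Nonempty)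
    (hnonneg : ∀ j, 0 ≤ hA.eigenvalues j) : univ.sup' hm hA.eigenvalues ≤ A.trace := by
  rw [hA.trace_eq_sum_eigenvalues]
  exact sup'_le _ _ fun j _ => single_le_sum (fun i _ => hnonneg i) (mem_univ j)

end IsHermitian

section Covariance

variable [DecidableEq m] {y : m → ℝ}

theorem dotProduct_diagonal_sub_vecMulVec_mulVec (hy : ∑ i, y i = 1) (v : m → ℝ) :
    v ⬝ᵥ (diagonal y - vecMulVec y y) *ᵥ v = ∑ i, y i * (v i - y ⬝ᵥ v) ^ 2 := by
  have hexpand : ∀ i, y i * (v i - y ⬝ᵥ v) ^ 2 =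
      v i * (y i * v i) - 2 * (y ⬝ᵥ v) * (y i * v i) + (y ⬝ᵥ v) ^ 2 * y i := fun i => by ring
  have hdiag : v ⬝ᵥ diagonal y *ᵥ v = ∑ i, v i * (y i * v i) := by
    simp only [dotProduct, mulVec_diagonal]
  have hrank : v ⬝ᵥ vecMulVec y y *ᵥ v = (y ⬝ᵥ v) ^ 2 := by
    rw [vecMulVec_mulVec]
    simp [dotProduct_comm, sq]
  simp only [hexpand, sum_add_distrib, sum_sub_distrib, ← mul_sum, hy]
  rw [sub_mulVec, dotProduct_sub, hdiag, hrank, show ∑ i, y i * v i = y ⬝ᵥ v from rfl]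
  ring

theorem diagonal_sub_vecMulVec_mulVec_one (hy : ∑ i, y i = 1) :
    (diagonal y - vecMulVec y y) *ᵥ 1 = 0 := by
  rw [sub_mulVec, vecMulVec_mulVec, dotProduct_one, hy]
  ext i
  simp [mulVec_diagonal]

theorem inf'_le_dotProduct_diagonal_sub_vecMulVec_mulVec (hm : (univ : Finset m).Nonempty)
    (hy0 : ∀ i, 0 ≤ y i) (hy1 : ∑ i, y i = 1) {v : m → ℝ} (hv0 : ∑ i, v i = 0)
    (hv1 : v ⬝ᵥ v = 1) : univ.inf' hm y ≤ v ⬝ᵥ (diagonal y - vecMulVec y y) *ᵥ v := by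
  set μ := y ⬝ᵥ v
  have hc : 0 ≤ univ.inf' hm y := le_inf' hm y fun i _ => hy0 i
  have hdev : 1 ≤ ∑ i, (v i - μ) ^ 2 := by
    have hexpand : ∀ i, (v i - μ) ^ 2 = v i * v i - 2 * μ * v i + μ ^ 2 := fun i => by ring
    have hvv : ∑ i, v i * v i = 1 := hv1
    simp only [hexpand, sum_add_distrib, sum_sub_distrib, ← mul_sum, hv0, hvv, sum_const,
      card_univ, nsmul_eq_mul]
    nlinarith [sq_nonneg μ]
  rw [dotProduct_diagonal_sub_vecMulVec_mulVec hy1]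
  calc univ.inf' hm y ≤ univ.inf' hm y * ∑ i, (v i - μ) ^ 2 := le_mul_of_one_le_right hc hdev
    _ = ∑ i, univ.inf' hm y * (v i - μ) ^ 2 := mul_sum _ _ _
    _ ≤ ∑ i, y i * (v i - μ) ^ 2 :=
      sum_le_sum fun i _ => mul_le_mul_of_nonneg_right (inf'_le y (mem_univ i)) (sq_nonneg _)

end Covariance

end Matrix

theorem eigenvalue_bounds_KQK {C : ℕ} (hC : 1 < C)
    (y : Fin C → ℝ) (hy0 : ∀ i, 0 < y i) (hy1 : ∑ i, y i = 1)
    (Q : Matrix (Fin C) (Fin C) ℝ)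
    (hQ : Q = Matrix.diagonal y - Matrix.vecMulVec y y)
    (K : Matrix (Fin C) (Fin (C - 1)) ℝ)
    (hKiso : Kᵀ * K = 1) (hKones : ∀ j, ∑ i, K i j = 0)
    (A : Matrix (Fin (C - 1)) (Fin (C - 1)) ℝ) (hA : A = Kᵀ * Q * K)
    (hAh : A.IsHermitian) :
    IsLeast {r : ℝ | ∃ v : Fin C → ℝ, (∑ i, v i = 0) ∧ (∑ i, v i ^ 2 = 1) ∧
        r = v ⬝ᵥ Q.mulVec v}
      (Finset.univ.inf' (Finset.univ_nonempty_iff.mpr ⟨⟨0, by omega⟩⟩) hAh.eigenvalues) ∧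
    (Finset.univ.inf' (Finset.univ_nonempty_iff.mpr ⟨⟨0, by omega⟩⟩) y
      ≤ Finset.univ.inf' (Finset.univ_nonempty_iff.mpr ⟨⟨0, by omega⟩⟩) hAh.eigenvalues) ∧
    (Finset.univ.sup' (Finset.univ_nonempty_iff.mpr ⟨⟨0, by omega⟩⟩) hAh.eigenvalues
      ≤ (Q * K * Kᵀ).trace) ∧
    (Q * K * Kᵀ).trace < C := by
  have hne : (univ : Finset (Fin (C - 1))).Nonempty := univ_nonempty_iff.mpr ⟨⟨0, by omega⟩⟩
  have hneC : (univ : Finset (Fin C)).Nonempty := univ_nonempty_iff.mpr ⟨⟨0, by omega⟩⟩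
  have hcard : Fintype.card (Fin (C - 1)) + 1 = Fintype.card (Fin C) := by
    simp only [Fintype.card_fin]; omega
  have hsq : ∀ v : Fin C → ℝ, ∑ i, v i ^ 2 = v ⬝ᵥ v := fun v => by simp [dotProduct, sq]
  have hleast : IsLeast {r : ℝ | ∃ v : Fin C → ℝ, (∑ i, v i = 0) ∧ (∑ i, v i ^ 2 = 1) ∧
      r = v ⬝ᵥ Q.mulVec v} (univ.inf' hne hAh.eigenvalues) := by
    simp only [hsq]
    rw [setOf_quadForm_sum_eq_zero_eq Q hKiso hKones hcard, ← hA]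
    exact hAh.isLeast_inf'_eigenvalues hne
  have hy_le : univ.inf' hneC y ≤ univ.inf' hne hAh.eigenvalues := by
    obtain ⟨v, hv0, hv1, hv⟩ := hleast.1
    rw [hv, hQ]
    exact inf'_le_dotProduct_diagonal_sub_vecMulVec_mulVec hneC (fun i => (hy0 i).le) hy1 hv0
      ((hsq v).symm.trans hv1)
  have htrace : (Q * K * Kᵀ).trace = 1 - y ⬝ᵥ y := by
    rw [Matrix.mul_assoc, mul_transpose_eq_centeringMatrix hKiso hKones hcard,
      mul_centeringMatrix_of_mulVec_one_eq_zero (hQ ▸ diagonal_sub_vecMulVec_mulVec_one hy1), hQ,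
      trace_sub, trace_diagonal, trace_vecMulVec, hy1]
  refine ⟨hleast, hy_le, ?_, ?_⟩
  · rw [trace_mul_comm, ← Matrix.mul_assoc, ← hA]
    refine hAh.sup'_eigenvalues_le_trace hne fun j => ?_
    exact ((lt_inf'_iff _).2 fun i _ => hy0 i).le.trans (hy_le.trans (inf'_le _ (mem_univ j)))
  · have hyy : 0 < y ⬝ᵥ y := sum_pos (fun i _ => mul_pos (hy0 i) (hy0 i)) hneC
    have hC1 : (1 : ℝ) < C := by exact_mod_cast hC
    linarith
end
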